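/- Let d ≥ 1 and let M, N be d×d matrices with entries in A. Then det(I − MX) ⋆ det(I − NX) = det(I − (M⊗N)X), where M⊗N denotes the Kronecker (tensor) product of matrices, a d²×d² matrix with entries (M⊗N)_{(j,k),(i,l)} = M_{ji}N_{kl}, and det(I − MX) is viewed as an element of 𝒜 (it is a polynomial in X with constant coefficient 1). -/

import Mathlib

open PowerSeries

/-- Formal exponential: for `F` with zero constant coefficient this is
`exp F = ∑ F^k / k!` (each coefficient is a finite sum). -/
noncomputable def pexp {A : Type*} [CommRing A] [Algebra ℚ A] (F : PowerSeries A) :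
    PowerSeries A :=
  PowerSeries.mk fun n =>
    ∑ k ∈ Finset.range (n + 1), ((k.factorial : ℚ)⁻¹) • (PowerSeries.coeff n (F ^ k))

/-- Formal logarithm: for `f` with constant coefficient `1` this is
`log f = ∑_{k≥1} (-1)^{k+1} (f-1)^k / k`; it is the inverse bijection of `pexp`
between `X·A[[X]]` and `𝒜 = 1 + X·A[[X]]`. -/
noncomputable def plog {A : Type*} [CommRing A] [Algebra ℚ A] (f : PowerSeries A) :
    PowerSeries A :=
  PowerSeries.mk fun n =>
    if n = 0 then 0 else
      ∑ k ∈ Finset.range (n + 1), (((-1 : ℚ) ^ (k + 1)) / k) • (PowerSeries.coeff n ((f - 1) ^ k))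

/-- The eñe product: if `f = exp (∑_{i≥1} Fᵢ Xⁱ)` and `g = exp (∑_{i≥1} Gᵢ Xⁱ)` then
`f ⋆ g = exp (−∑_{i≥1} i·Fᵢ·Gᵢ·Xⁱ)`. -/
noncomputable def ene {A : Type*} [CommRing A] [Algebra ℚ A] (f g : PowerSeries A) :
    PowerSeries A :=
  pexp (PowerSeries.mk fun i =>
    -(i : A) * (PowerSeries.coeff i (plog f)) * (PowerSeries.coeff i (plog g)))

open Kronecker
open Finset

set_option linter.unusedSectionVars false
set_option maxHeartbeats 1600000
section EneAux
variable {A : Type*} [CommRing A] [Algebra ℚ A]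

lemma coeff_derivFun (f : PowerSeries A) (n : ℕ) :
    coeff n (derivativeFun f) = coeff (n + 1) f * (n + 1) := coeff_derivative f n

lemma derivFun_C {r : A} : derivativeFun (C r : PowerSeries A) = 0 := derivative_C

lemma coeff_pow_eq_zero' {F : PowerSeries A} (hF : constantCoeff F = 0) {k n : ℕ}
    (h : n < k) : coeff n (F ^ k) = 0 := by
  have : (X : PowerSeries A) ^ k ∣ F ^ k :=
    pow_dvd_pow_of_dvd (X_dvd_iff.mpr hF) k
  exact (X_pow_dvd_iff.mp this) n h

lemma coeff_pexp_agree {F : PowerSeries A} (hF : constantCoeff F = 0) {b N : ℕ} (hb : b ≤ N) :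
    coeff b (pexp F) = coeff b (∑ k ∈ range (N + 1), ((k.factorial : ℚ)⁻¹) • F ^ k) := by
  rw [pexp, coeff_mk, map_sum]
  simp_rw [PowerSeries.coeff_smul]
  refine Finset.sum_subset (range_subset_range.mpr (by omega)) ?_
  intro k _ hk
  rw [mem_range, not_lt] at hk
  rw [coeff_pow_eq_zero' hF (by omega), smul_zero]

lemma coeff_plog_agree {f : PowerSeries A} (hf : constantCoeff f = 1) {b N : ℕ}
    (hb : b ≤ N) :
    coeff b (plog f) =
      coeff b (∑ k ∈ range (N + 1), (((-1 : ℚ) ^ (k + 1)) / k) • (f - 1) ^ k) := by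
  have hu : constantCoeff (f - 1) = 0 := by simp [hf]
  rw [plog, coeff_mk, map_sum]
  simp_rw [PowerSeries.coeff_smul]
  by_cases h0 : b = 0
  · subst h0
    rw [if_pos rfl]
    symm
    refine Finset.sum_eq_zero ?_
    intro k hk
    rcases Nat.eq_zero_or_pos k with hk0 | hk0
    · subst hk0; simp
    · rw [coeff_pow_eq_zero' hu hk0, smul_zero]
  · rw [if_neg h0]
    refine Finset.sum_subset (range_subset_range.mpr (by omega)) ?_
    intro k _ hk
    rw [mem_range, not_lt] at hk
    rw [coeff_pow_eq_zero' hu (by omega), smul_zero]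

lemma derivativeFun_qsmul (q : ℚ) (f : PowerSeries A) :
    derivativeFun (q • f) = q • derivativeFun f := by
  ext n
  rw [coeff_derivFun, PowerSeries.coeff_smul, PowerSeries.coeff_smul,
    coeff_derivFun, smul_mul_assoc]

lemma derivativeFun_pow' (F : PowerSeries A) (k : ℕ) :
    derivativeFun (F ^ k) = k • (F ^ (k - 1) * derivativeFun F) := by
  have h := Derivation.leibniz_pow (PowerSeries.derivative A) F k
  rw [smul_eq_mul] at h
  exact h

lemma derivativeFun_sum {ι : Type*} (s : Finset ι) (f : ι → PowerSeries A) :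
    derivativeFun (∑ i ∈ s, f i) = ∑ i ∈ s, derivativeFun (f i) :=
  map_sum (PowerSeries.derivative A) f s

lemma coeff_mul_right_agree {f g g' : PowerSeries A} (n : ℕ)
    (h : ∀ b ≤ n, coeff b g = coeff b g') :
    coeff n (f * g) = coeff n (f * g') := by
  rw [coeff_mul, coeff_mul]
  refine Finset.sum_congr rfl fun p hp => ?_
  rw [Finset.HasAntidiagonal.mem_antidiagonal] at hp
  rw [h p.2 (by omega)]

lemma coeff_pow_mul_eq_zero {u g : PowerSeries A} (hu : constantCoeff u = 0) {n k : ℕ}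
    (h : n < k) : coeff n (u ^ k * g) = 0 := by
  rw [coeff_mul]
  refine Finset.sum_eq_zero fun p hp => ?_
  rw [Finset.HasAntidiagonal.mem_antidiagonal] at hp
  rw [coeff_pow_eq_zero' hu (by omega), zero_mul]

lemma fact_scalar (k : ℕ) (x : PowerSeries A) :
    (((k + 1).factorial : ℚ)⁻¹) • ((k + 1) • x) = ((k.factorial : ℚ)⁻¹) • x := by
  rw [← Nat.cast_smul_eq_nsmul ℚ (k + 1) x, smul_smul]
  congr 1
  rw [Nat.factorial_succ]
  have h1 : ((k + 1 : ℕ) : ℚ) ≠ 0 := by exact_mod_cast Nat.succ_ne_zero k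
  have h2 : ((k.factorial : ℕ) : ℚ) ≠ 0 := by exact_mod_cast (Nat.factorial_ne_zero k)
  push_cast
  field_simp

lemma constantCoeff_pexp (F : PowerSeries A) : constantCoeff (pexp F) = 1 := by
  rw [← coeff_zero_eq_constantCoeff_apply, pexp, coeff_mk]
  simp

lemma constantCoeff_plog (f : PowerSeries A) : constantCoeff (plog f) = 0 := by
  rw [← coeff_zero_eq_constantCoeff_apply, plog, coeff_mk]
  simp

lemma derivativeFun_pexp {F : PowerSeries A} (hF : constantCoeff F = 0) :
    derivativeFun (pexp F) = derivativeFun F * pexp F := by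
  ext n
  have hdS' : derivativeFun (∑ k ∈ range (n + 2), ((k.factorial : ℚ)⁻¹) • F ^ k)
      = derivativeFun F * ∑ k ∈ range (n + 1), ((k.factorial : ℚ)⁻¹) • F ^ k := by
    rw [derivativeFun_sum]
    simp_rw [derivativeFun_qsmul, derivativeFun_pow']
    rw [Finset.sum_range_succ']
    simp only [Nat.add_sub_cancel, zero_smul, smul_zero, add_zero]
    have : ∀ k ∈ range (n + 1),
        (((k + 1).factorial : ℚ)⁻¹) • ((k + 1) • (F ^ k * derivativeFun F))
          = (((k.factorial : ℚ)⁻¹) • F ^ k) * derivativeFun F := by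
      intro k _
      rw [fact_scalar, smul_mul_assoc]
    rw [Finset.sum_congr rfl this, ← Finset.sum_mul, mul_comm]
  have h1 : coeff n (derivativeFun (pexp F)) =
      coeff n (derivativeFun (∑ k ∈ range (n + 2), ((k.factorial : ℚ)⁻¹) • F ^ k)) := by
    rw [coeff_derivFun, coeff_derivFun, coeff_pexp_agree hF (le_refl (n + 1))]
  rw [h1, hdS']
  exact coeff_mul_right_agree n fun b hb => (coeff_pexp_agree hF hb).symm

lemma mul_derivativeFun_plog {f : PowerSeries A} (hf : constantCoeff f = 1) :
    f * derivativeFun (plog f) = derivativeFun f := by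
  have hu : constantCoeff (f - 1) = 0 := by simp [hf]
  have hdu : derivativeFun f = derivativeFun (f - 1) := by
    have : f = (f - 1) + 1 := by ring
    nth_rewrite 1 [this]
    rw [derivativeFun_add, derivativeFun_one, add_zero]
  ext n
  set u : PowerSeries A := f - 1 with hudef
  have hdP : derivativeFun (∑ k ∈ range (n + 2), (((-1 : ℚ) ^ (k + 1)) / k) • u ^ k)
      = (∑ k ∈ range (n + 1), (-u) ^ k) * derivativeFun u := by
    rw [derivativeFun_sum]
    simp_rw [derivativeFun_qsmul, derivativeFun_pow']
    rw [Finset.sum_range_succ']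
    simp only [Nat.cast_zero, div_zero, zero_smul, smul_zero, add_zero, Nat.add_sub_cancel]
    have : ∀ k ∈ range (n + 1),
        ((((-1 : ℚ) ^ (k + 1 + 1)) / (k + 1 : ℕ)) • ((k + 1) • (u ^ k * derivativeFun u)))
          = (-u) ^ k * derivativeFun u := by
      intro k _
      rw [← Nat.cast_smul_eq_nsmul ℚ (k + 1) (u ^ k * derivativeFun u), smul_smul]
      have h1 : ((k + 1 : ℕ) : ℚ) ≠ 0 := by exact_mod_cast Nat.succ_ne_zero k
      have hsc : ((-1 : ℚ) ^ (k + 1 + 1)) / ((k + 1 : ℕ) : ℚ) * ((k + 1 : ℕ) : ℚ)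
          = (-1 : ℚ) ^ k := by
        field_simp
        ring
      rw [hsc, ← smul_mul_assoc, ← smul_pow, neg_one_smul]
    rw [Finset.sum_congr rfl this, ← Finset.sum_mul]
  have hgeom : f * (∑ k ∈ range (n + 1), (-u) ^ k) = 1 - (-u) ^ (n + 1) := by
    have hg := geom_sum_mul (-u) (n + 1)
    have hfu : f = 1 + u := by rw [hudef]; ring
    rw [hfu]
    linear_combination -hg
  have hL : coeff n (f * derivativeFun (plog f))
      = coeff n (f * ((∑ k ∈ range (n + 1), (-u) ^ k) * derivativeFun u)) := by
    rw [← hdP]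
    refine coeff_mul_right_agree n fun b hb => ?_
    rw [coeff_derivFun, coeff_derivFun, coeff_plog_agree hf (by omega : b + 1 ≤ n + 1)]
  rw [hL, ← mul_assoc, hgeom, sub_mul, one_mul, map_sub]
  have hz : coeff n ((-u) ^ (n + 1) * derivativeFun u) = 0 := by
    refine coeff_pow_mul_eq_zero ?_ (Nat.lt_succ_self n)
    simp [hu]
  rw [hz, sub_zero, hdu]

variable {A : Type*} [CommRing A] [Algebra ℚ A]

lemma isUnit_natCast_A {n : ℕ} (hn : n ≠ 0) : IsUnit (n : A) := by
  have h1 : algebraMap ℚ A ((n : ℚ)) = (n : A) := map_natCast _ n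
  have h2 : IsUnit (algebraMap ℚ A ((n : ℚ))) := by
    have : IsUnit (n : ℚ) := isUnit_iff_ne_zero.mpr (by exact_mod_cast hn)
    exact this.map (algebraMap ℚ A)
  rwa [h1] at h2

lemma noZero_nsmul : NoZeroSMulDivisors ℕ A := by
  constructor
  intro c x h
  rcases Nat.eq_zero_or_pos c with hc | hc
  · exact Or.inl hc
  · refine Or.inr ?_
    have hcu : IsUnit (c : A) := isUnit_natCast_A hc.ne'
    have hcx : (c : A) * x = 0 := by rw [← nsmul_eq_mul]; exact h
    rcases hcu with ⟨u, hu⟩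
    have := congrArg (fun y => (↑u⁻¹ : A) * y) hcx
    simp only [← hu, ← mul_assoc, Units.inv_mul, one_mul, mul_zero] at this
    exact this

lemma ext_deriv {f g : PowerSeries A} (h : derivativeFun f = derivativeFun g)
    (h0 : constantCoeff f = constantCoeff g) : f = g := by
  haveI : IsAddTorsionFree A := IsAddTorsionFree.of_module_rat A
  exact PowerSeries.derivative.ext h h0

lemma ode_unique {f g : PowerSeries A} (hf : constantCoeff f = 1)
    (hg : constantCoeff g = 1)
    (h : derivativeFun g * f = derivativeFun f * g) : g = f := by
  set i := invOfUnit f 1 with hi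
  have hfi : f * i = 1 := mul_invOfUnit f 1 (by simp [hf])
  have hdfi : derivativeFun (f * i) = 0 := by rw [hfi, derivativeFun_one]
  rw [derivativeFun_mul] at hdfi
  -- hdfi : f • di + i • df = 0
  have hdi : derivativeFun i = -(i * i) * derivativeFun f := by
    have h2 := congrArg (fun y => i * y) hdfi
    simp only [smul_eq_mul, mul_add, mul_zero] at h2
    calc derivativeFun i = (f * i) * derivativeFun i := by rw [hfi, one_mul]
    _ = i * (f * derivativeFun i) := by ring
    _ = -(i * i) * derivativeFun f := by linear_combination h2
  have hw : g * i = 1 := by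
    have hdw : derivativeFun (g * i) = 0 := by
      rw [derivativeFun_mul, smul_eq_mul, smul_eq_mul, hdi]
      linear_combination i * i * h - (i * derivativeFun g) * hfi
    have h0 : constantCoeff (g * i) = 1 := by
      have : constantCoeff i = 1 := by
        rw [hi, constantCoeff_invOfUnit]; simp
      rw [map_mul, hg, this, one_mul]
    have := ext_deriv (f := g * i) (g := 1)
      (by rw [hdw, derivativeFun_one]) (by rw [h0, map_one])
    exact this
  calc g = g * (f * i) := by rw [hfi, mul_one]
  _ = (g * i) * f := by ring
  _ = f := by rw [hw, one_mul]

lemma derivativeFun_prod {ι : Type*} [DecidableEq ι] (s : Finset ι) (f : ι → PowerSeries A) :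
    derivativeFun (∏ i ∈ s, f i) =
      ∑ i ∈ s, (∏ j ∈ s.erase i, f j) * derivativeFun (f i) := by
  classical
  induction s using Finset.induction_on with
  | empty => simp [derivativeFun_one]
  | @insert a s ha ih =>
    rw [Finset.prod_insert ha, derivativeFun_mul, Finset.sum_insert ha, Finset.erase_insert ha,
      smul_eq_mul, smul_eq_mul, ih, Finset.mul_sum]
    rw [add_comm]
    congr 1
    refine Finset.sum_congr rfl fun i hi => ?_
    have hia : i ≠ a := fun h => ha (h ▸ hi)
    rw [Finset.erase_insert_of_ne hia.symm,
      Finset.prod_insert (fun h => ha (Finset.mem_of_mem_erase h)), mul_assoc]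

lemma derivativeFun_intCast (z : ℤ) : derivativeFun ((z : PowerSeries A)) = 0 := by
  rw [← map_intCast (C (R := A)) z, derivFun_C]

lemma derivativeFun_det {ι : Type*} [Fintype ι] [DecidableEq ι]
    (B : Matrix ι ι (PowerSeries A)) :
    derivativeFun B.det =
      ∑ i, (B.updateCol i fun j => derivativeFun (B j i)).det := by
  classical
  rw [Matrix.det_apply', derivativeFun_sum]
  have step : ∀ σ : Equiv.Perm ι,
      derivativeFun (((Equiv.Perm.sign σ : ℤ) : PowerSeries A) * ∏ i, B (σ i) i)
        = ((Equiv.Perm.sign σ : ℤ) : PowerSeries A) *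
            ∑ i, (∏ j ∈ Finset.univ.erase i, B (σ j) j) * derivativeFun (B (σ i) i) := by
    intro σ
    rw [derivativeFun_mul, derivativeFun_intCast, smul_zero, add_zero, smul_eq_mul,
      derivativeFun_prod]
  simp_rw [step, Finset.mul_sum]
  rw [Finset.sum_comm]
  refine Finset.sum_congr rfl fun i _ => ?_
  rw [Matrix.det_apply']
  refine Finset.sum_congr rfl fun σ _ => ?_
  congr 1
  have hsplit : (∏ j, (B.updateCol i fun j' => derivativeFun (B j' i)) (σ j) j)
      = (B.updateCol i fun j' => derivativeFun (B j' i)) (σ i) i *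
          ∏ j ∈ Finset.univ.erase i, (B.updateCol i fun j' => derivativeFun (B j' i)) (σ j) j :=
    (Finset.mul_prod_erase Finset.univ _ (Finset.mem_univ i)).symm
  rw [hsplit, Matrix.updateCol_self]
  have : ∀ j ∈ Finset.univ.erase i,
      (B.updateCol i fun j' => derivativeFun (B j' i)) (σ j) j = B (σ j) j := by
    intro j hj
    rw [Matrix.updateCol_apply, if_neg (Finset.ne_of_mem_erase hj)]
  rw [Finset.prod_congr rfl this, mul_comm]

variable {ι : Type*} [Fintype ι] [DecidableEq ι]

noncomputable def Bm (P : Matrix ι ι A) : Matrix ι ι (PowerSeries A) :=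
  1 - (X : PowerSeries A) • P.map C

noncomputable def Qm (P : Matrix ι ι A) : Matrix ι ι (PowerSeries A) :=
  Matrix.of fun i j => mk fun n => (P ^ n) i j

lemma Bm_mul_Qm (P : Matrix ι ι A) : Bm P * Qm P = 1 := by
  ext i j m
  rw [Matrix.mul_apply]
  have expand : ∀ k, Bm P i k * Qm P k j
      = (if i = k then Qm P k j else 0) - X * (C (P i k) * Qm P k j) := by
    intro k
    rw [Bm, Matrix.sub_apply, Matrix.smul_apply, Matrix.map_apply, Matrix.one_apply,
      smul_eq_mul, sub_mul, mul_assoc]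
    congr 1
    split_ifs <;> simp
  simp_rw [expand]
  rw [map_sum]
  simp_rw [map_sub, apply_ite (coeff m), map_zero, Finset.sum_sub_distrib,
    Finset.sum_ite_eq, if_pos (Finset.mem_univ i)]
  cases m with
  | zero =>
    have hz : ∀ k : ι, coeff 0 (X * (C (P i k) * Qm P k j)) = 0 := by
      intro k
      rw [coeff_zero_eq_constantCoeff, map_mul, constantCoeff_X, zero_mul]
    simp_rw [hz, Finset.sum_const_zero, sub_zero]
    rw [Qm]
    simp [Matrix.one_apply, coeff_mk, Matrix.one_apply, apply_ite (coeff 0)]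
  | succ m =>
    have hs : ∀ k : ι, coeff (m + 1) (X * (C (P i k) * Qm P k j))
        = P i k * (P ^ m) k j := by
      intro k
      rw [coeff_succ_X_mul, coeff_C_mul, Qm]
      simp [coeff_mk]
    simp_rw [hs]
    rw [Qm]
    simp only [Matrix.of_apply, coeff_mk]
    rw [← Matrix.mul_apply, ← pow_succ']
    have : coeff (m + 1) ((1 : Matrix ι ι (PowerSeries A)) i j) = 0 := by
      rw [Matrix.one_apply]
      split_ifs <;> simp [coeff_one]
    rw [this, sub_eq_zero]

lemma trace_Qm_mul (P : Matrix ι ι A) :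
    Matrix.trace (Qm P * P.map C) = mk fun n => Matrix.trace (P ^ (n + 1)) := by
  apply PowerSeries.ext
  intro m
  rw [coeff_mk, Matrix.trace, Matrix.trace]
  simp only [Matrix.diag_apply, Matrix.mul_apply, Qm, Matrix.map_apply, Matrix.of_apply]
  rw [map_sum]
  refine Finset.sum_congr rfl fun i _ => ?_
  rw [map_sum]
  have : ∀ k : ι, coeff m ((mk fun n => (P ^ n) i k) * C (P k i))
      = (P ^ m) i k * P k i := by
    intro k
    rw [coeff_mul_C, coeff_mk]
  simp_rw [this]
  rw [pow_succ, Matrix.mul_apply]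

lemma derivativeFun_Bm_entry (P : Matrix ι ι A) (j i : ι) :
    derivativeFun (Bm P j i) = -(C (P j i)) := by
  rw [Bm, Matrix.sub_apply, Matrix.smul_apply, Matrix.map_apply, smul_eq_mul]
  have hsub : derivativeFun ((1 : Matrix ι ι (PowerSeries A)) j i - X * C (P j i))
      = derivativeFun ((1 : Matrix ι ι (PowerSeries A)) j i) -
        derivativeFun (X * C (P j i)) :=
    map_sub (PowerSeries.derivative A) _ _
  rw [hsub]
  have h1 : derivativeFun ((1 : Matrix ι ι (PowerSeries A)) j i) = 0 := by
    rw [Matrix.one_apply]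
    split_ifs
    · exact derivativeFun_one
    · exact map_zero (PowerSeries.derivative A)
  have h2 : derivativeFun (X * C (P j i)) = C (P j i) := by
    rw [derivativeFun_mul, derivFun_C, smul_zero, smul_eq_mul]
    have : derivativeFun (X : PowerSeries A) = 1 := PowerSeries.derivative_X
    rw [this, mul_one, zero_add]
  rw [h1, h2, zero_sub]

lemma derivativeFun_det_Bm (P : Matrix ι ι A) :
    derivativeFun (Bm P).det =
      -((Bm P).det * mk fun n => Matrix.trace (P ^ (n + 1))) := by
  rw [derivativeFun_det]
  have h1 : ∀ i : ι, ((Bm P).updateCol i fun j => derivativeFun (Bm P j i)).det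
      = -(((Bm P).updateCol i fun j => (P.map C) j i).det) := by
    intro i
    have hcol : (fun j => derivativeFun (Bm P j i))
        = (-1 : PowerSeries A) • (fun j => (P.map C) j i) := by
      funext j
      rw [derivativeFun_Bm_entry, Pi.smul_apply]
      simp [Matrix.map_apply]
    rw [hcol, Matrix.det_updateCol_smul]
    ring
  simp_rw [h1]
  rw [Finset.sum_neg_distrib]
  congr 1
  have h2 : ∀ i : ι, ((Bm P).updateCol i fun j => (P.map C) j i).det
      = Matrix.cramer (Bm P) (fun j => (P.map C) j i) i := fun i =>
    (Matrix.cramer_apply _ _ _).symm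
  simp_rw [h2, Matrix.cramer_eq_adjugate_mulVec]
  have hadj : Matrix.adjugate (Bm P) = (Bm P).det • Qm P := by
    calc Matrix.adjugate (Bm P) = Matrix.adjugate (Bm P) * (Bm P * Qm P) := by
          rw [Bm_mul_Qm, Matrix.mul_one]
      _ = (Matrix.adjugate (Bm P) * Bm P) * Qm P := by rw [Matrix.mul_assoc]
      _ = ((Bm P).det • (1 : Matrix ι ι (PowerSeries A))) * Qm P := by
          rw [Matrix.adjugate_mul]
      _ = (Bm P).det • Qm P := by rw [Matrix.smul_mul, Matrix.one_mul]
  simp_rw [hadj]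
  rw [← trace_Qm_mul]
  rw [Matrix.trace]
  rw [Finset.mul_sum]
  refine Finset.sum_congr rfl fun i _ => ?_
  rw [Matrix.mulVec, Matrix.diag_apply, Matrix.mul_apply, dotProduct, Finset.mul_sum]
  refine Finset.sum_congr rfl fun j _ => ?_
  rw [Matrix.smul_apply, smul_eq_mul, mul_assoc]


lemma pexp_plog {f : PowerSeries A} (hf : constantCoeff f = 1) : pexp (plog f) = f := by
  apply ode_unique hf (constantCoeff_pexp _)
  rw [derivativeFun_pexp (constantCoeff_plog f)]
  calc derivativeFun (plog f) * pexp (plog f) * f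
      = (f * derivativeFun (plog f)) * pexp (plog f) := by ring
    _ = derivativeFun f * pexp (plog f) := by rw [mul_derivativeFun_plog hf]

lemma constantCoeff_det_Bm (P : Matrix ι ι A) :
    constantCoeff (Bm P).det = 1 := by
  have h1 : constantCoeff (Bm P).det = ((Bm P).map (constantCoeff)).det :=
    RingHom.map_det (constantCoeff) (Bm P)
  have h2 : (Bm P).map (constantCoeff) = 1 := by
    ext i j
    rw [Matrix.map_apply, Bm, Matrix.sub_apply, Matrix.smul_apply, Matrix.map_apply,
      smul_eq_mul, map_sub, map_mul, constantCoeff_X, zero_mul, sub_zero, Matrix.one_apply,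
      Matrix.one_apply]
    split_ifs <;> simp
  rw [h1, h2, Matrix.det_one]

lemma neg_inv_smul_mul_cast (m : ℕ) (a : A) :
    ((-((((m + 1 : ℕ) : ℚ))⁻¹)) • a) * ((m : A) + 1) = -a := by
  have hcast : ((m : A) + 1) = algebraMap ℚ A (((m : ℚ)) + 1) := by
    rw [map_add, map_one, map_natCast]
  rw [hcast, mul_comm, ← Algebra.smul_def, smul_smul]
  have hsc : (((m : ℚ)) + 1) * (-((((m + 1 : ℕ) : ℚ))⁻¹)) = -1 := by
    push_cast
    have : ((m : ℚ) + 1) ≠ 0 := by positivity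
    field_simp
  rw [hsc, neg_one_smul]

lemma plog_det_Bm (P : Matrix ι ι A) :
    plog (Bm P).det =
      mk fun n => if n = 0 then 0 else (-(((n : ℚ))⁻¹)) • Matrix.trace (P ^ n) := by
  have hfc := constantCoeff_det_Bm P
  have hR : derivativeFun
        (mk fun n => if n = 0 then 0 else (-(((n : ℚ))⁻¹)) • Matrix.trace (P ^ n) :
          PowerSeries A)
      = -(mk fun n => Matrix.trace (P ^ (n + 1))) := by
    apply PowerSeries.ext
    intro m
    rw [coeff_derivFun, coeff_mk, if_neg (Nat.succ_ne_zero m)]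
    have := neg_inv_smul_mul_cast m (Matrix.trace (P ^ (m + 1)))
    push_cast at this ⊢
    rw [this]
    simp [coeff_mk]
  apply ext_deriv
  · have hunit : IsUnit ((Bm P).det) :=
      IsUnit.of_mul_eq_one _ (mul_invOfUnit _ 1 (by rw [hfc]; simp))
    apply hunit.mul_left_cancel
    rw [mul_derivativeFun_plog hfc, derivativeFun_det_Bm, hR]
    ring
  · rw [constantCoeff_plog, ← coeff_zero_eq_constantCoeff_apply, coeff_mk, if_pos rfl]

lemma kron_pow {κ : Type*} [Fintype κ] [DecidableEq κ] (M N : Matrix κ κ A) (i : ℕ) :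
    (M ⊗ₖ N) ^ i = (M ^ i) ⊗ₖ (N ^ i) := by
  induction i with
  | zero => rw [pow_zero, pow_zero, pow_zero, Matrix.one_kronecker_one]
  | succ k ih => rw [pow_succ, pow_succ, pow_succ, ih, Matrix.mul_kronecker_mul]

lemma scalar_combine (m : ℕ) (a b : A) :
    -(((m + 1 : ℕ)) : A) * ((-((((m + 1 : ℕ)) : ℚ)⁻¹)) • a) * ((-((((m + 1 : ℕ)) : ℚ)⁻¹)) • b)
      = (-((((m + 1 : ℕ)) : ℚ)⁻¹)) • (a * b) := by
  set q : ℚ := (((m + 1 : ℕ)) : ℚ) with hq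
  have hq0 : q ≠ 0 := by
    rw [hq]
    exact_mod_cast Nat.succ_ne_zero m
  calc -(((m + 1 : ℕ)) : A) * ((-(q⁻¹)) • a) * ((-(q⁻¹)) • b)
      = -((((m + 1 : ℕ)) : A) * (((-(q⁻¹)) • a) * ((-(q⁻¹)) • b))) := by ring
    _ = -((((m + 1 : ℕ)) : A) * ((q⁻¹ * q⁻¹) • (a * b))) := by
        rw [smul_mul_smul_comm, neg_mul_neg]
    _ = -((m + 1 : ℕ) • ((q⁻¹ * q⁻¹) • (a * b))) := by rw [nsmul_eq_mul]
    _ = -((q * (q⁻¹ * q⁻¹)) • (a * b)) := by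
        rw [← Nat.cast_smul_eq_nsmul ℚ, smul_smul, hq]
    _ = (-(q⁻¹)) • (a * b) := by
        rw [neg_smul]
        congr 2
        field_simp

end EneAux


/-- **Eñe product and tensor product**: for `d×d` matrices `M, N` over `A`,
`det(I − MX) ⋆ det(I − NX) = det(I − (M⊗N)X)`, where `M⊗N` is the Kronecker
product. -/
theorem ene_det_kronecker {A : Type*} [CommRing A] [Algebra ℚ A]
    (d : ℕ) (hd : 1 ≤ d) (M N : Matrix (Fin d) (Fin d) A) :
    ene ((1 - (PowerSeries.X : PowerSeries A) • M.map ((PowerSeries.C : A →+* PowerSeries A))).det)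
        ((1 - (PowerSeries.X : PowerSeries A) • N.map ((PowerSeries.C : A →+* PowerSeries A))).det) =
      (1 - (PowerSeries.X : PowerSeries A) • (M ⊗ₖ N).map ((PowerSeries.C : A →+* PowerSeries A))).det := by
  show ene (Bm M).det (Bm N).det = (Bm (M ⊗ₖ N)).det
  rw [ene, plog_det_Bm M, plog_det_Bm N]
  have key : (PowerSeries.mk fun i =>
      -(i : A) * (coeff i (mk fun n =>
          if n = 0 then 0 else (-(((n : ℚ))⁻¹)) • Matrix.trace (M ^ n)))
        * (coeff i (mk fun n =>
          if n = 0 then 0 else (-(((n : ℚ))⁻¹)) • Matrix.trace (N ^ n))))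
      = plog ((Bm (M ⊗ₖ N)).det) := by
    rw [plog_det_Bm]
    apply PowerSeries.ext
    intro i
    rw [coeff_mk, coeff_mk, coeff_mk, coeff_mk]
    cases i with
    | zero => simp
    | succ m =>
      rw [if_neg (Nat.succ_ne_zero m), if_neg (Nat.succ_ne_zero m),
        if_neg (Nat.succ_ne_zero m)]
      rw [kron_pow, Matrix.trace_kronecker]
      exact scalar_combine m _ _
  rw [key, pexp_plog (constantCoeff_det_Bm _)]
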